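/- arXiv:1107.4981 — 3 statements merged into one kernel-verified Lean document; each statement's English description precedes it below -/
import Mathlib

section
/- Let v and w be two links in a metric space (X, d), let c > 3 be a real number, and let D = max{d_vv, d_ww}. Suppose d_vv ≤ d_ww and d_wv ≥ c·d_ww. Then d_vw ≥ (c−2)·D, d_wv ≥ (c−2)·D, and d(s_v, s_w) ≥ (c−3)·D. -/
/-- Lemma on spatial separation: for links `v = (s_v, r_v)` and `w = (s_w, r_w)`
in a metric space, `c > 3`, `D = max{d_vv, d_ww}`, if `d_vv ≤ d_ww` and
`d_wv ≥ c·d_ww`, then `d_vw ≥ (c−2)·D`, `d_wv ≥ (c−2)·D` and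
`d(s_v, s_w) ≥ (c−3)·D`. -/
theorem stmt_5 {X : Type*} [MetricSpace X] (sv rv sw rw : X) (c : ℝ) (hc : 3 < c)
    (D : ℝ) (hD : D = max (dist sv rv) (dist sw rw))
    (hlen : dist sv rv ≤ dist sw rw)
    (hsep : c * dist sw rw ≤ dist sw rv) :
    (c - 2) * D ≤ dist sv rw ∧ (c - 2) * D ≤ dist sw rv ∧
      (c - 3) * D ≤ dist sv sw := by
  have hDe : D = dist sw rw := by rw [hD, max_eq_right hlen]
  have t1 : dist sw rv ≤ dist sw rw + dist rw sv + dist sv rv :=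
    (dist_triangle4 sw rw sv rv)
  have t2 : dist sw rv ≤ dist sw sv + dist sv rv := dist_triangle _ _ _
  have h1 : dist rw sv = dist sv rw := dist_comm _ _
  have h2 : dist sw sv = dist sv sw := dist_comm _ _
  have hnn : (0:ℝ) ≤ dist sw rw := dist_nonneg
  subst hDe
  refine ⟨by nlinarith, by nlinarith, by nlinarith⟩
end

section
/- Let L be a finite set of links in a metric space (X, d) with all lengths and all asymmetric distances between distinct links positive, let α > 0 and c > 1, and let (A_1, A_2, …, A_t) be a partition of L. Suppose there exists a link v ∈ A_t such that a_{A_i}(v) > 1/c^α for every i ∈ {1, …, t−1}. Then t < c^α · I_{r_v}(L) + 1; in particular t < c^α · I(L) + 1. -/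
/-- A link: a sender-receiver pair of points in a metric space. -/
structure Link (X : Type*) where
  s : X
  r : X

/-- The affectance of a link `v` caused by a finite set `S` of links:
`a_S(v) = ∑_{w ∈ S \ {v}} (d_ww / d_wv)^α`. -/
noncomputable def affectance {X : Type*} [MetricSpace X] (α : ℝ)
    (S : Finset (Link X)) (v : Link X) : ℝ :=
  haveI := Classical.decEq (Link X)
  ∑ w ∈ S.erase v, (dist w.s w.r / dist w.s v.r) ^ α

/-- The interference measure at a point `p`:
`I_p(S) = ∑_{w ∈ S} min{1, (d_ww / d(s_w, p))^α}`. -/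
noncomputable def Ipt {X : Type*} [MetricSpace X] (α : ℝ)
    (S : Finset (Link X)) (p : X) : ℝ :=
  ∑ w ∈ S, min 1 ((dist w.s w.r / dist w.s p) ^ α)

/-- `I(S)`: the maximum of `I_p(S)` over all sender and receiver points of links of `S`. -/
noncomputable def Imax {X : Type*} [MetricSpace X] (α : ℝ)
    (S : Finset (Link X)) : ℝ :=
  sSup (Ipt α S '' {p | (∃ w ∈ S, p = w.s) ∨ (∃ w ∈ S, p = w.r)})

lemma min_one_sum_le {ι : Type*} (S : Finset ι) (f : ι → ℝ) (hf : ∀ w ∈ S, 0 ≤ f w) :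
    min 1 (∑ w ∈ S, f w) ≤ ∑ w ∈ S, min 1 (f w) := by
  by_cases h : ∀ w ∈ S, f w ≤ 1
  · calc min 1 (∑ w ∈ S, f w) ≤ ∑ w ∈ S, f w := min_le_right _ _
      _ = ∑ w ∈ S, min 1 (f w) :=
        Finset.sum_congr rfl (fun w hw => (min_eq_right (h w hw)).symm)
  · push_neg at h
    obtain ⟨w, hw, hw1⟩ := h
    calc min 1 (∑ w ∈ S, f w) ≤ 1 := min_le_left _ _
      _ = min 1 (f w) := (min_eq_left hw1.le).symm
      _ ≤ ∑ w ∈ S, min 1 (f w) :=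
        Finset.single_le_sum (fun x hx => le_min zero_le_one (hf x hx)) hw

/-- If `(A_1, …, A_t)` is a partition of the link set `L` and the link `v ∈ A_t` has
affectance greater than `1/c^α` from each earlier slot, then `t < c^α·I_{r_v}(L) + 1`;
in particular `t < c^α·I(L) + 1`. -/
theorem stmt_10 {X : Type*} [MetricSpace X]
    (α : ℝ) (hα : 0 < α) (c : ℝ) (hc : 1 < c)
    (L : Finset (Link X))
    (hlen : ∀ v ∈ L, 0 < dist v.s v.r)
    (hdist : ∀ v ∈ L, ∀ w ∈ L, v ≠ w → 0 < dist v.s w.r)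
    (t : ℕ) (ht : 0 < t) (A : Fin t → Finset (Link X))
    (hdisj : ∀ i j : Fin t, i ≠ j → Disjoint (A i) (A j))
    (hcover : ∀ w : Link X, w ∈ L ↔ ∃ i, w ∈ A i)
    (v : Link X) (hv : v ∈ A ⟨t - 1, by omega⟩)
    (haff : ∀ i : Fin t, (i : ℕ) < t - 1 → 1 / c ^ α < affectance α (A i) v) :
    (t : ℝ) < c ^ α * Ipt α L v.r + 1 ∧ (t : ℝ) < c ^ α * Imax α L + 1 := by
  classical
  have hc0 : (0:ℝ) < c := by linarith
  have hcpos : (0:ℝ) < c ^ α := Real.rpow_pos_of_pos hc0 α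
  have hc1 : (1:ℝ) < c ^ α := (Real.one_lt_rpow_iff_of_pos hc0).2 (Or.inl ⟨hc, hα⟩)
  have hvL : v ∈ L := (hcover v).2 ⟨_, hv⟩
  set g : Link X → ℝ := fun w => min 1 ((dist w.s w.r / dist w.s v.r) ^ α) with hg
  have hg0 : ∀ w, 0 ≤ g w := fun w =>
    le_min zero_le_one (Real.rpow_nonneg (div_nonneg dist_nonneg dist_nonneg) α)
  have hgv : g v = 1 := by
    simp [hg, div_self (ne_of_gt (hlen v hvL)), Real.one_rpow]
  set I : Finset (Fin t) := Finset.univ.filter (fun i => (i:ℕ) < t - 1) with hI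
  set T : Finset (Link X) := I.biUnion (fun i => (A i).erase v) with hT
  have hvnot : v ∉ T := by
    simp only [hT, Finset.mem_biUnion]
    rintro ⟨i, hi, hmem⟩
    exact (Finset.mem_erase.1 hmem).1 rfl
  have hTsub : insert v T ⊆ L := by
    intro w hw
    rcases Finset.mem_insert.1 hw with rfl | hw
    · exact hvL
    · simp only [hT, Finset.mem_biUnion] at hw
      obtain ⟨i, hi, hmem⟩ := hw
      exact (hcover w).2 ⟨i, (Finset.mem_erase.1 hmem).2⟩
  have hsumT : ∑ w ∈ T, g w = ∑ i ∈ I, ∑ w ∈ (A i).erase v, g w :=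
    Finset.sum_biUnion (fun i _ j _ hij =>
      (hdisj i j hij).mono (Finset.erase_subset _ _) (Finset.erase_subset _ _))
  have hslot : ∀ i ∈ I, 1 / c ^ α < ∑ w ∈ (A i).erase v, g w := by
    intro i hi
    have hi' := (Finset.mem_filter.1 hi).2
    have h1 := haff i hi'
    have h2 : min 1 (affectance α (A i) v) ≤ ∑ w ∈ (A i).erase v, g w := by
      unfold affectance
      exact min_one_sum_le _ _
        (fun w _ => Real.rpow_nonneg (div_nonneg dist_nonneg dist_nonneg) α)
    have hlt1 : 1 / c ^ α < 1 := by rw [div_lt_one hcpos]; exact hc1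
    exact lt_of_lt_of_le (lt_min hlt1 h1) h2
  have hcard : I.card = t - 1 := by
    have himg : I.image Fin.val = Finset.range (t - 1) := by
      ext n
      simp only [hI, Finset.mem_image, Finset.mem_filter, Finset.mem_univ, true_and,
        Finset.mem_range]
      constructor
      · rintro ⟨i, h1, rfl⟩; exact h1
      · intro hn; exact ⟨⟨n, by omega⟩, hn, rfl⟩
    rw [← Finset.card_image_of_injective I Fin.val_injective, himg, Finset.card_range]
  have hkey : ((t:ℝ) - 1) / c ^ α + 1 ≤ Ipt α L v.r := by
    have h1 : ∑ w ∈ insert v T, g w ≤ Ipt α L v.r := by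
      unfold Ipt
      exact Finset.sum_le_sum_of_subset_of_nonneg hTsub (fun w _ _ => hg0 w)
    have h2 : ((t:ℝ) - 1) / c ^ α + 1 ≤ ∑ w ∈ insert v T, g w := by
      rw [Finset.sum_insert hvnot, hgv, hsumT]
      have h3 : ((t:ℝ) - 1) / c ^ α ≤ ∑ i ∈ I, ∑ w ∈ (A i).erase v, g w := by
        have h4 : ∑ i ∈ I, (1 / c ^ α) ≤ ∑ i ∈ I, ∑ w ∈ (A i).erase v, g w :=
          Finset.sum_le_sum (fun i hi => (hslot i hi).le)
        have h5 : ∑ i ∈ I, (1 / c ^ α) = ((t:ℝ) - 1) / c ^ α := by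
          rw [Finset.sum_const, hcard]
          have : ((t - 1 : ℕ) : ℝ) = (t:ℝ) - 1 := by
            have : (1:ℕ) ≤ t := ht
            push_cast [Nat.cast_sub this]; ring
          rw [nsmul_eq_mul, this]; ring
        linarith
      linarith
    linarith
  have hmain : (t : ℝ) < c ^ α * Ipt α L v.r + 1 := by
    have : ((t:ℝ) - 1) / c ^ α < Ipt α L v.r := by
      have h0 : (0:ℝ) < 1 := one_pos
      linarith
    rw [div_lt_iff₀ hcpos] at this
    nlinarith
  refine ⟨hmain, ?_⟩
  have hle : Ipt α L v.r ≤ Imax α L := by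
    unfold Imax
    have hfin : ({p | (∃ w ∈ L, p = w.s) ∨ (∃ w ∈ L, p = w.r)} : Set X).Finite := by
      apply Set.Finite.subset ((L.image Link.s ∪ L.image Link.r).finite_toSet)
      rintro p (⟨w, hw, rfl⟩ | ⟨w, hw, rfl⟩) <;>
        simp only [Finset.coe_union, Set.mem_union, Finset.mem_coe, Finset.mem_image]
      · exact Or.inl ⟨w, hw, rfl⟩
      · exact Or.inr ⟨w, hw, rfl⟩
    exact le_csSup (hfin.image _).bddAbove ⟨v.r, Or.inr ⟨v, hvL, rfl⟩, rfl⟩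
  nlinarith
end

section
/- Let A be a finite multiset of positive integers with |A| = n ≥ 2, let m₀ = max A, and let B be the multiset obtained from A by adding 2n new elements each equal to n²·m₀. Write S(M) for the sum of a multiset M. Then: (1) |B| = 3n; (2) there exists a sub-multiset A' of A with S(A') = S(A) − S(A') if and only if there exists a sub-multiset B' of B with S(B') = S(B) − S(B'); (3) every a ∈ A satisfies a/S(B) ≤ 1/(2n³); and (4) n²·m₀/S(B) ≤ 1/(2n). -/
/-!
The padding elements are each larger than `S(A)`, so in any equal split of `B` they must be
shared evenly, `n` on each side; removing them leaves an equal split of `A`. The size bounds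
follow from `S(B) ≥ 2n · n²m₀` and `a ≤ m₀`.
-/

namespace Multiset

theorem sum_le_sum_of_le {A B : Multiset ℕ} (h : A ≤ B) : A.sum ≤ B.sum := by
  obtain ⟨C, rfl⟩ := le_iff_exists_add.1 h
  simp

theorem exists_le_le_of_le_add {α : Type*} [DecidableEq α] {B A C : Multiset α}
    (h : B ≤ A + C) : ∃ A' ≤ A, ∃ C' ≤ C, B = A' + C' :=
  ⟨B ∩ A, inter_le_right, B - A, Multiset.sub_le_iff_le_add.2 (add_comm A C ▸ h),
    by rw [add_comm, sub_add_inter]⟩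

end Multiset

open Multiset

/-- `A` is a yes-instance of PARTITION. -/
def HasEvenSplit (A : Multiset ℕ) : Prop :=
  ∃ A' ≤ A, 2 * A'.sum = A.sum

theorem hasEvenSplit_iff {A : Multiset ℕ} :
    HasEvenSplit A ↔ ∃ A' ≤ A, A'.sum = A.sum - A'.sum := by
  refine exists_congr fun A' => and_congr_right fun hA' => ?_
  have := sum_le_sum_of_le hA'
  omega

theorem hasEvenSplit_add_replicate_iff {A : Multiset ℕ} {x : ℕ} (hx : A.sum < x) (k : ℕ) :
    HasEvenSplit (A + replicate (2 * k) x) ↔ HasEvenSplit A := by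
  constructor
  · rintro ⟨B', hB', hsum⟩
    obtain ⟨A', hA', C', hC', rfl⟩ := exists_le_le_of_le_add hB'
    obtain ⟨j, -, rfl⟩ := le_replicate_iff.1 hC'
    have hA'A := sum_le_sum_of_le hA'
    simp only [sum_add, sum_replicate, smul_eq_mul] at hsum
    -- `2 (j - k) x = S(A) - 2 S(A')` has absolute value at most `S(A) < x`. The cast of
    -- `A'.sum` is pushed into the sum, so its nonnegativity must be supplied by hand.
    have hjk : j = k := by
      by_contra hne
      rcases Nat.lt_or_gt_of_ne hne with h | h <;> nlinarith [Nat.zero_le A'.sum]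
    subst hjk
    exact ⟨A', hA', by linarith⟩
  · rintro ⟨A', hA', hsum⟩
    refine ⟨A' + replicate k x, add_le_add hA' (replicate_mono x (by omega)), ?_⟩
    simp only [sum_add, sum_replicate, smul_eq_mul]
    linarith

theorem natCast_div_le_one_div {a b c : ℕ} (hc : 0 < c) (h : c * a ≤ b) :
    (a : ℝ) / b ≤ 1 / c := by
  rcases b.eq_zero_or_pos with rfl | hb
  · simp
  rw [div_le_div_iff₀ (by exact_mod_cast hb) (by exact_mod_cast hc), one_mul, mul_comm]
  exact_mod_cast h

/-- Construction of the padded PARTITION instance `B` from `A`: adding `2n` copies of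
`n²·m₀` (where `n = |A|` and `m₀ = max A`) gives an equivalent instance with `|B| = 3n`,
`a/S(B) ≤ 1/(2n³)` for `a ∈ A`, and `a/S(B) ≤ 1/(2n)` for the new elements. -/
theorem stmt_12 (A : Multiset ℕ) (hpos : ∀ a ∈ A, 0 < a)
    (n : ℕ) (hn : n = Multiset.card A) (hn2 : 2 ≤ n)
    (m₀ : ℕ) (hm₀ : m₀ ∈ A ∧ ∀ a ∈ A, a ≤ m₀)
    (B : Multiset ℕ) (hB : B = A + Multiset.replicate (2 * n) (n ^ 2 * m₀)) :
    Multiset.card B = 3 * n ∧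
    ((∃ A' ≤ A, A'.sum = A.sum - A'.sum) ↔ (∃ B' ≤ B, B'.sum = B.sum - B'.sum)) ∧
    (∀ a ∈ A, (a : ℝ) / (B.sum : ℝ) ≤ 1 / (2 * (n : ℝ) ^ 3)) ∧
    ((n ^ 2 * m₀ : ℕ) : ℝ) / (B.sum : ℝ) ≤ 1 / (2 * (n : ℝ)) := by
  obtain ⟨hm₀A, hle⟩ := hm₀
  have hsumA : A.sum < n ^ 2 * m₀ := calc
    A.sum ≤ n * m₀ := by simpa [hn] using sum_le_card_nsmul A m₀ hle
    _ < n ^ 2 * m₀ := by gcongr; exacts [hpos m₀ hm₀A, by nlinarith]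
  have hsumB : 2 * n * (n ^ 2 * m₀) ≤ B.sum := by simp [hB]
  refine ⟨by simp [hB, hn]; ring, ?_, fun a ha => ?_, ?_⟩
  · rw [← hasEvenSplit_iff, ← hasEvenSplit_iff, hB, hasEvenSplit_add_replicate_iff hsumA]
  · have : 2 * n ^ 3 * a ≤ B.sum := calc
      2 * n ^ 3 * a ≤ 2 * n ^ 3 * m₀ := by gcongr; exact hle a ha
      _ = 2 * n * (n ^ 2 * m₀) := by ring
      _ ≤ B.sum := hsumB
    exact_mod_cast natCast_div_le_one_div (by positivity) this
  · exact_mod_cast natCast_div_le_one_div (by omega) hsumB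
end
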